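/- Let (C, R, 𝓡) be a big-step semantics and Π = (Π_ι)_{ι∈I} an indexed predicate on configurations satisfying conditions S1 (local preservation), S2 (∃-progress) and S3 (∀-progress). If c ∈ Π, then the judgment c ⇒ wrong is not derivable in the wrong semantics 𝓡^wr. -/

import Mathlib

namespace BigStepMeta

universe u

/-- A judgment `c ⇒ r`: a configuration together with a result. -/
structure Judg (C : Type u) where
  conf : C
  res  : C

/-- A big-step rule: a conclusion configuration plus a nonempty finite list of premises.
The last premise is the continuation; the conclusion judgment is `concl ⇒ (last premise).res`. -/
structure Rule (C : Type u) where
  concl : C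
  premises : List (Judg C)
  ne : premises ≠ []

/-- The last premise (continuation) of a rule. -/
def Rule.lastJ {C : Type u} (ρ : Rule C) : Judg C := ρ.premises.getLast ρ.ne

/-- A big-step semantics `(C, R, 𝓡)`: configurations `C`, results `R ⊆ C`, rules `𝓡`. -/
structure BigStep (C : Type u) where
  R : Set C
  Rules : Set (Rule C)
  concl_not_res : ∀ ρ ∈ Rules, ρ.concl ∉ R
  prem_res : ∀ ρ ∈ Rules, ∀ j ∈ ρ.premises, j.res ∈ R

variable {C : Type u}

/-- Condition BP: the number of premises of rules is bounded. -/
def BigStep.BP (S : BigStep C) : Prop :=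
  ∃ b : ℕ, ∀ ρ ∈ S.Rules, ρ.premises.length ≤ b

/-- Inductive derivability `⊢_𝓡 c ⇒ r`: there is a finite proof tree.
For each result `r ∈ R` there is an implicit axiom `r ⇒ r`. -/
inductive Derives (S : BigStep C) : C → C → Prop
  | ax {r : C} : r ∈ S.R → Derives S r r
  | rule {ρ : Rule C} : ρ ∈ S.Rules →
      (∀ j ∈ ρ.premises, Derives S j.conf j.res) →
      Derives S ρ.concl ρ.lastJ.res

/-! ## Traces -/

/-- A finite or infinite trace of configurations. -/
inductive Trace (C : Type u) where
  | fin : List C → Trace C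
  | inf : (ℕ → C) → Trace C

/-- Concatenation of a finite list with an infinite sequence. -/
def appendInf (l : List C) (f : ℕ → C) : ℕ → C :=
  fun n => if h : n < l.length then l.get ⟨n, h⟩ else f (n - l.length)

/-- The finite trace `t_k · R(j_k)` associated to a premise and a chosen finite trace. -/
def finPart (p : Judg C × List C) : List C := p.2 ++ [p.1.res]

/-- The rule instances of the trace semantics `𝓡^tr`: a conclusion `c ⇒ t`
together with its list of premises. -/
inductive TrRule (S : BigStep C) : C → Trace C → List (C × Trace C) → Prop
  | ax {r : C} : r ∈ S.R → TrRule S r (.fin [r]) []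
  | intro {ρ : Rule C} {ts : List (List C)} :
      ρ ∈ S.Rules → ts.length = ρ.premises.length →
      TrRule S ρ.concl
        (.fin (ρ.concl :: ((ρ.premises.zip ts).map finPart).flatten))
        ((ρ.premises.zip ts).map (fun p => (p.1.conf, Trace.fin (finPart p))))
  | div {ρ : Rule C} {pre rest : List (Judg C)} {j : Judg C} {ts : List (List C)} {f : ℕ → C} :
      ρ ∈ S.Rules → ρ.premises = pre ++ j :: rest →
      ts.length = pre.length →
      TrRule S ρ.concl
        (.inf (appendInf (ρ.concl :: ((pre.zip ts).map finPart).flatten) f))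
        (((pre.zip ts).map (fun p => (p.1.conf, Trace.fin (finPart p)))) ++
          [(j.conf, Trace.inf f)])

/-- `⊢_{𝓡^tr} c ⇒ t` by a finite derivation (inductive interpretation of `𝓡^tr`). -/
inductive TrDerivesFin (S : BigStep C) : C → Trace C → Prop
  | step {c : C} {t : Trace C} {prems : List (C × Trace C)} :
      TrRule S c t prems →
      (∀ p ∈ prems, TrDerivesFin S p.1 p.2) →
      TrDerivesFin S c t

/-- `⊢_{𝓡^tr} c ⇒ t`: coinductive interpretation of `𝓡^tr`, i.e. existence of a possibly
infinite proof tree, expressed as membership in some backward-closed (consistent) relation. -/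
def TrDerives (S : BigStep C) (c : C) (t : Trace C) : Prop :=
  ∃ X : C → Trace C → Prop,
    (∀ c' t', X c' t' → ∃ prems, TrRule S c' t' prems ∧ ∀ p ∈ prems, X p.1 p.2) ∧
    X c t

/-! ## Wrong -/

/-- There is a rule with conclusion configuration `c`, first premises `pre`, whose next
premise has configuration `c'` and result `r` (i.e. a rule `ρ' ∼ᵢ ρ` with `R(ρ', i) = r`). -/
def HasContinuation (S : BigStep C) (c : C) (pre : List (Judg C)) (c' r : C) : Prop :=
  ∃ ρ' ∈ S.Rules, ∃ j' : Judg C, ∃ rest' : List (Judg C),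
    ρ'.premises = pre ++ j' :: rest' ∧ ρ'.concl = c ∧ j'.conf = c' ∧ j'.res = r

/-- Derivability in the wrong semantics `𝓡^wr`; `none` plays the role of `wrong`. -/
inductive DerivesW (S : BigStep C) : C → Option C → Prop
  | ax {r : C} : r ∈ S.R → DerivesW S r (some r)
  | rule {ρ : Rule C} : ρ ∈ S.Rules →
      (∀ j ∈ ρ.premises, DerivesW S j.conf (some j.res)) →
      DerivesW S ρ.concl (some ρ.lastJ.res)
  | wrong_intro {ρ : Rule C} {pre rest : List (Judg C)} {j : Judg C} {r : C} :
      ρ ∈ S.Rules → ρ.premises = pre ++ j :: rest → r ∈ S.R →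
      ¬ HasContinuation S ρ.concl pre j.conf r →
      (∀ j' ∈ pre, DerivesW S j'.conf (some j'.res)) →
      DerivesW S j.conf (some r) →
      DerivesW S ρ.concl none
  | wrong_ax {c : C} : c ∉ S.R → (¬ ∃ ρ ∈ S.Rules, ρ.concl = c) →
      DerivesW S c none
  | wrong_prop {ρ : Rule C} {pre rest : List (Judg C)} {j : Judg C} :
      ρ ∈ S.Rules → ρ.premises = pre ++ j :: rest →
      (∀ j' ∈ pre, DerivesW S j'.conf (some j'.res)) →
      DerivesW S j.conf none →
      DerivesW S ρ.concl none

/-! ## Indexed predicates and soundness conditions -/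

variable {I : Type u}

/-- `c ∈ Π`, i.e. `c ∈ Π_ι` for some index `ι`. -/
def InPred (P : I → Set C) (c : C) : Prop := ∃ i : I, c ∈ P i

/-- Condition S1 (local preservation). -/
def LocalPres (S : BigStep C) (P : I → Set C) : Prop :=
  ∀ ρ ∈ S.Rules, ∀ i : I, ρ.concl ∈ P i →
    ∃ f : ℕ → I, f (ρ.premises.length - 1) = i ∧
      ∀ (k : ℕ) (hk : k < ρ.premises.length),
        (∀ (h : ℕ) (hh : h < k), (ρ.premises.get ⟨h, hh.trans hk⟩).res ∈ P (f h)) →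
        (ρ.premises.get ⟨k, hk⟩).conf ∈ P (f k)

/-- Condition S2 (∃-progress). -/
def ExProgress (S : BigStep C) (P : I → Set C) : Prop :=
  ∀ c : C, InPred P c → c ∉ S.R → ∃ ρ ∈ S.Rules, ρ.concl = c

/-- Condition S3 (∀-progress). -/
def AllProgress (S : BigStep C) (P : I → Set C) : Prop :=
  ∀ ρ ∈ S.Rules, InPred P ρ.concl →
    ∀ (pre : List (Judg C)) (j : Judg C) (rest : List (Judg C)),
      ρ.premises = pre ++ j :: rest →
      (∀ j' ∈ pre, Derives S j'.conf j'.res) →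
      ∀ r ∈ S.R, Derives S j.conf r →
      HasContinuation S ρ.concl pre j.conf r

/-- Condition S4 (progress-may). -/
def ProgressMay (S : BigStep C) (P : I → Set C) : Prop :=
  ∀ c : C, InPred P c → c ∉ S.R →
    ∃ ρ ∈ S.Rules, ρ.concl = c ∧
      ∀ (pre : List (Judg C)) (j : Judg C) (rest : List (Judg C)),
        ρ.premises = pre ++ j :: rest →
        (∀ j' ∈ pre, Derives S j'.conf j'.res) →
        ¬ Derives S j.conf j.res →
        ¬ ∃ r : C, Derives S j.conf r

/-! ## Partial evaluation: the inference system `𝓡^?` -/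

/-- The rule instances of the partial-evaluation semantics `𝓡^?`; `none` plays the role
of the unknown result `?`. -/
inductive URule (S : BigStep C) : C → Option C → List (C × Option C) → Prop
  | ax {r : C} : r ∈ S.R → URule S r (some r) []
  | rule {ρ : Rule C} : ρ ∈ S.Rules →
      URule S ρ.concl (some ρ.lastJ.res) (ρ.premises.map (fun j => (j.conf, some j.res)))
  | unk_ax {c : C} : URule S c none []
  | unk {ρ : Rule C} {pre rest : List (Judg C)} {j : Judg C} {r : C} :
      ρ ∈ S.Rules → ρ.premises = pre ++ j :: rest → r ∈ S.R →
      URule S ρ.concl none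
        (pre.map (fun j' => (j'.conf, some j'.res)) ++ [(j.conf, some r)])
  | prop {ρ : Rule C} {pre rest : List (Judg C)} {j : Judg C} :
      ρ ∈ S.Rules → ρ.premises = pre ++ j :: rest →
      URule S ρ.concl none
        (pre.map (fun j' => (j'.conf, some j'.res)) ++ [(j.conf, none)])

/-! ## Possibly infinite trees as partial functions -/

/-- A (possibly infinite) tree labelled by judgments `c ⇒ u`, `u ∈ R ∪ {?}`, given as a
partial function on addresses (lists of positive naturals), with nonempty domain closed
under parents and left siblings. -/
structure PTree (C : Type u) where
  label : List ℕ+ → Option (C × Option C)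
  root_def : label [] ≠ none
  closed : ∀ (α : List ℕ+) (n : ℕ+), label (α ++ [n]) ≠ none → label α ≠ none
  siblings : ∀ (α : List ℕ+) (n k : ℕ+), k ≤ n →
    label (α ++ [n]) ≠ none → label (α ++ [k]) ≠ none

/-- `τ` is a proof tree in `𝓡^?`: at each node, the children are exactly the premises
of a rule of `𝓡^?` with the node's judgment as conclusion. -/
def PTree.IsProofTree (S : BigStep C) (τ : PTree C) : Prop :=
  ∀ (α : List ℕ+) (p : C × Option C), τ.label α = some p →
    ∃ prems : List (C × Option C), URule S p.1 p.2 prems ∧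
      ∀ n : ℕ+, τ.label (α ++ [n]) = prems[(n : ℕ) - 1]?

/-- The order `τ ⊑ τ'` on trees: larger domain, same configurations, and equal subtrees
at nodes whose result is already known (in `R`). -/
def PTree.LE (τ τ' : PTree C) : Prop :=
  ∀ (α : List ℕ+) (p : C × Option C), τ.label α = some p →
    ∃ p' : C × Option C, τ'.label α = some p' ∧ p.1 = p'.1 ∧
      (p.2 ≠ none → ∀ β : List ℕ+, τ.label (α ++ β) = τ'.label (α ++ β))

/-- A tree is finite if its domain is finite. -/
def PTree.Finite (τ : PTree C) : Prop := {α : List ℕ+ | τ.label α ≠ none}.Finite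

/-- A (typically infinite) proof tree is well-formed if at every level there is a node
labelled by an incomplete judgment, and subtrees rooted at complete judgments are finite. -/
def PTree.WellFormed (τ : PTree C) : Prop :=
  (∀ n : ℕ, ∃ (α : List ℕ+) (c : C), α.length = n ∧ τ.label α = some (c, none)) ∧
  (∀ (α : List ℕ+) (c r : C), τ.label α = some (c, some r) →
    {β : List ℕ+ | τ.label (α ++ β) ≠ none}.Finite)

/-! ## Finite proof trees and the reduction relation -/

/-- Finite trees labelled by judgments `c ⇒ u`, `u ∈ R ∪ {?}` (with `none` playing `?`). -/
inductive FTree (C : Type u) where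
  | node : C → Option C → List (FTree C) → FTree C

/-- The judgment at the root of a finite tree. -/
def FTree.judg : FTree C → C × Option C
  | .node c u _ => (c, u)

/-- `τ` is a finite proof tree in the partial-evaluation semantics `𝓡^?`. -/
inductive IsFPT (S : BigStep C) : FTree C → Prop
  | mk {c : C} {u : Option C} {l : List (FTree C)} :
      URule S c u (l.map FTree.judg) →
      (∀ τ ∈ l, IsFPT S τ) →
      IsFPT S (.node c u l)

/-- A finite proof tree is complete if all its judgments have results in `R`. -/
inductive FTree.Complete (S : BigStep C) : FTree C → Prop
  | mk {c : C} {r : C} {l : List (FTree C)} :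
      r ∈ S.R →
      (∀ τ ∈ l, FTree.Complete S τ) →
      FTree.Complete S (.node c (some r) l)

/-- The order `τ ⊑ τ'` on finite trees. -/
inductive FTreeLE : FTree C → FTree C → Prop
  | done {c r : C} {l : List (FTree C)} :
      FTreeLE (.node c (some r) l) (.node c (some r) l)
  | step {c : C} {u' : Option C} {l l₁ l₂ : List (FTree C)} :
      l.length = l₁.length →
      (∀ p ∈ l.zip l₁, FTreeLE p.1 p.2) →
      FTreeLE (.node c none l) (.node c u' (l₁ ++ l₂))

/-- The one-step reduction relation `⇝` on finite proof trees in `𝓡^?`. -/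
inductive Red (S : BigStep C) : FTree C → FTree C → Prop
  /-- The axiom `r ⇒ ?` (with `r ∈ R`) steps to the axiom `r ⇒ r`. -/
  | res {r : C} : r ∈ S.R → Red S (.node r none []) (.node r (some r) [])
  /-- The axiom `c ⇒ ?` steps, for a rule `ρ` with conclusion configuration `c`,
  to the tree applying `prop(ρ,1,?)` to the leaf `c' ⇒ ?`, `c'` the first premise
  configuration of `ρ`. -/
  | start {ρ : Rule C} {j : Judg C} {rest : List (Judg C)} :
      ρ ∈ S.Rules → ρ.premises = j :: rest →
      Red S (.node ρ.concl none []) (.node ρ.concl none [.node j.conf none []])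
  /-- A tree with root `c ⇒ ?` whose children are the first `i` premises of some
  `ρ' ∈ 𝓡` (with `#ρ' = i`, last premise result `r`) steps to the same tree with
  root `c ⇒ r`. -/
  | complete {ρ' : Rule C} {pre : List (Judg C)} {j' : Judg C} {l : List (FTree C)} :
      ρ' ∈ S.Rules → ρ'.premises = pre ++ [j'] →
      l.map FTree.judg = pre.map (fun j => (j.conf, some j.res)) ++ [(j'.conf, some j'.res)] →
      Red S (.node ρ'.concl none l) (.node ρ'.concl (some j'.res) l)
  /-- A tree with root `c ⇒ ?` whose children are the first `i` premises of some
  `ρ' ∈ 𝓡` having an `(i+1)`-th premise steps by adding the leaf for that premise's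
  configuration. -/
  | next {ρ' : Rule C} {pre rest : List (Judg C)} {j' j'' : Judg C} {l : List (FTree C)} :
      ρ' ∈ S.Rules → ρ'.premises = pre ++ j' :: j'' :: rest →
      l.map FTree.judg = pre.map (fun j => (j.conf, some j.res)) ++ [(j'.conf, some j'.res)] →
      Red S (.node ρ'.concl none l) (.node ρ'.concl none (l ++ [.node j''.conf none []]))
  /-- Propagation: a step of the last child is propagated. -/
  | inner {c : C} {l : List (FTree C)} {τ τ' : FTree C} :
      Red S τ τ' →
      Red S (.node c none (l ++ [τ])) (.node c none (l ++ [τ']))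


/-! Soundness of the wrong semantics: S2 and S3 exclude the two wrong-introduction rules at
configurations of `Π`, and S1 together with subject reduction keeps every wrong-propagation
step inside `Π`, so no derivation of `c ⇒ wrong` can start in `Π`. -/

section Soundness

variable {C I : Type u} {S : BigStep C} {P : I → Set C}

theorem DerivesW.derives {c r : C} (h : DerivesW S c (some r)) : Derives S c r := by
  generalize hu : some r = u at h
  induction h generalizing r with
  | ax hr => cases hu; exact .ax hr
  | rule hρ _ ih => cases hu; exact .rule hρ fun j hj => ih j hj rfl
  | wrong_intro | wrong_ax | wrong_prop => cases hu

theorem res_mem_of_index_chain {l : List (Judg C)} {f : ℕ → I}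
    (hconf : ∀ (k : ℕ) (hk : k < l.length),
      (∀ (h : ℕ) (hh : h < k), (l.get ⟨h, hh.trans hk⟩).res ∈ P (f h)) →
        (l.get ⟨k, hk⟩).conf ∈ P (f k))
    {n : ℕ} (hn : n ≤ l.length)
    (hpres : ∀ (k : ℕ) (hk : k < n) (i : I),
      (l.get ⟨k, hk.trans_le hn⟩).conf ∈ P i → (l.get ⟨k, hk.trans_le hn⟩).res ∈ P i) :
    ∀ (k : ℕ) (hk : k < n), (l.get ⟨k, hk.trans_le hn⟩).res ∈ P (f k) := by
  intro k
  induction k using Nat.strong_induction_on with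
  | _ k ih =>
    intro hk
    exact hpres k hk (f k) (hconf k _ fun h hh => ih h hh (hh.trans hk))

theorem Derives.mem_of_localPres (hS1 : LocalPres S P) {c r : C} (h : Derives S c r) :
    ∀ i : I, c ∈ P i → r ∈ P i := by
  induction h with
  | ax _ => exact fun _ hi => hi
  | @rule ρ hρ _ ih =>
    intro i hi
    obtain ⟨f, hf, hconf⟩ := hS1 ρ hρ i hi
    have hlen : 0 < ρ.premises.length := List.length_pos_iff.mpr ρ.ne
    have hlast : ρ.lastJ = ρ.premises.get ⟨ρ.premises.length - 1, Nat.sub_lt hlen one_pos⟩ := by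
      simp [Rule.lastJ, List.getLast_eq_getElem]
    rw [hlast, ← hf]
    exact res_mem_of_index_chain hconf le_rfl
      (fun k _ => ih _ (List.get_mem _ _)) _ (Nat.sub_lt hlen one_pos)

theorem LocalPres.inPred_conf (hS1 : LocalPres S P) {ρ : Rule C} (hρ : ρ ∈ S.Rules)
    (hc : InPred P ρ.concl) {pre rest : List (Judg C)} {j : Judg C}
    (heq : ρ.premises = pre ++ j :: rest) (hpre : ∀ j' ∈ pre, Derives S j'.conf j'.res) :
    InPred P j.conf := by
  obtain ⟨i, hi⟩ := hc
  obtain ⟨f, -, hconf⟩ := hS1 ρ hρ i hi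
  have hlt : pre.length < ρ.premises.length := by simp [heq]
  have hget_pre : ∀ k (hk : k < pre.length),
      ρ.premises.get ⟨k, hk.trans hlt⟩ = pre.get ⟨k, hk⟩ := by
    intro k hk
    simp [heq, List.getElem_append_left, hk]
  have hget : ρ.premises.get ⟨pre.length, hlt⟩ = j := by simp [heq]
  have hres := res_mem_of_index_chain hconf hlt.le fun k hk => by
    rw [hget_pre k hk]
    exact (hpre _ (List.get_mem _ _)).mem_of_localPres hS1
  exact ⟨f pre.length, hget ▸ hconf _ hlt hres⟩

end Soundness

/-- Theorem `sound-wrong`, soundness-must w.r.t. the wrong semantics: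
if S1, S2 and S3 hold and `c ∈ Π`, then `c ⇒ wrong` is not derivable in `𝓡^wr`. -/
theorem statement5 {C : Type u} {I : Type u} (S : BigStep C) (P : I → Set C)
    (hS1 : LocalPres S P) (hS2 : ExProgress S P) (hS3 : AllProgress S P)
    (c : C) (hc : InPred P c) :
    ¬ DerivesW S c none := by
  intro hw
  generalize hu : (none : Option C) = u at hw
  induction hw with
  | ax | rule => cases hu
  | @wrong_intro ρ pre rest j r hρ heq hr hno hpre hj =>
    exact hno (hS3 ρ hρ hc pre j rest heq (fun j' hj' => (hpre j' hj').derives) r hr hj.derives)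
  | wrong_ax hcR hno => exact hno (hS2 _ hc hcR)
  | wrong_prop hρ heq hpre _ _ ih =>
    exact ih (hS1.inPred_conf hρ hc heq fun j' hj' => (hpre j' hj').derives) rfl

end BigStepMeta
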